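/- arXiv:2205.14114 — 6 statements merged into one kernel-verified Lean document; each statement's English description precedes it below -/
import Mathlib

section
/- For every t > 0 and every integrable u : (0,t) → ℝ with u₁(t) = 0, one has ∫₀ᵗ |u₁|⁵ ≤ 3 ‖u‖_{L^∞} (∫₀ᵗ u₁²)², where u₁(s) = ∫₀ˢ u. -/
/-!
The primitive `F = u₁` is `M`-Lipschitz and vanishes at `0` and `t`. Left of any point `s`,
`F` stays above the tent `x ↦ M (x - e)` on `[e, s]`, `e = s - |F s| / M`, whose `L²`-mass is
`|F s|³ / (3M)`; the same holds to the right of `s`. Hence `|F s|³ ≤ (3M/2) ∫ F²`, and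
multiplying by `F s ^ 2` and integrating gives the claim, even with `3/2` in place of `3`.
-/

open MeasureTheory Set
open scoped NNReal

section LipschitzVanishing

variable {G : ℝ → ℝ} {K : ℝ≥0}

theorem abs_pow_three_le_of_lipschitzOnWith_of_left {c s : ℝ} (hcs : c ≤ s)
    (hG : LipschitzOnWith K G (Icc c s)) (hGc : G c = 0) :
    |G s| ^ 3 ≤ 3 * K * ∫ x in c..s, G x ^ 2 := by
  have hint : IntervalIntegrable (fun x => G x ^ 2) volume c s :=
    (hG.continuousOn.pow 2).intervalIntegrable_of_Icc hcs
  have hdrop : ∀ x ∈ Icc c s, |G s| - K * (s - x) ≤ |G x| := by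
    intro x hx
    have h := hG.dist_le_mul s ⟨hcs, le_rfl⟩ x hx
    rw [Real.dist_eq, Real.dist_eq, abs_of_nonneg (sub_nonneg.2 hx.2)] at h
    linarith [abs_sub_abs_le_abs_sub (G s) (G x)]
  obtain ha | ha := (abs_nonneg (G s)).eq_or_lt
  · rw [← ha]
    have : 0 ≤ ∫ x in c..s, G x ^ 2 :=
      intervalIntegral.integral_nonneg hcs fun x _ => sq_nonneg _
    simpa using mul_nonneg (mul_nonneg zero_le_three K.coe_nonneg) this
  set a := |G s|
  have haK : a ≤ K * (s - c) := by simpa [hGc] using hdrop c ⟨le_rfl, hcs⟩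
  have hK : 0 < (K : ℝ) := by
    by_contra! h
    nlinarith [K.coe_nonneg, sub_nonneg.2 hcs]
  set e := s - a / K
  have hse : s - e = a / K := by ring
  have hce : c ≤ e := by
    have : a / K ≤ s - c := (div_le_iff₀' hK).2 haK
    linarith
  have hes : e ≤ s := by linarith [div_pos ha hK]
  have htent : ∀ x ∈ Icc e s, (K * (x - e)) ^ 2 ≤ G x ^ 2 := by
    intro x hx
    have h := hdrop x ⟨hce.trans hx.1, hx.2⟩
    rw [← sq_abs (G x)]
    refine pow_le_pow_left₀ (mul_nonneg K.coe_nonneg (sub_nonneg.2 hx.1)) ?_ 2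
    have : K * (x - e) = a - K * (s - x) := by rw [show e = s - a / K from rfl]; field_simp; ring
    linarith
  have htent_mass : ∫ x in e..s, (K * (x - e)) ^ 2 = a ^ 3 / (3 * K) := by
    simp_rw [mul_pow]
    rw [intervalIntegral.integral_const_mul,
      intervalIntegral.integral_comp_sub_right (fun x => x ^ 2), integral_pow, hse, sub_self]
    norm_num
    field_simp
  calc a ^ 3 = 3 * K * ∫ x in e..s, (K * (x - e)) ^ 2 := by
        rw [htent_mass]; field_simp
    _ ≤ 3 * K * ∫ x in e..s, G x ^ 2 := by
        gcongr
        exact intervalIntegral.integral_mono_on hes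
          (Continuous.intervalIntegrable (by fun_prop) _ _)
          (hint.mono_set (by rw [uIcc_of_le hes, uIcc_of_le hcs]; exact Icc_subset_Icc hce le_rfl))
          htent
    _ ≤ 3 * K * ∫ x in c..s, G x ^ 2 := by
        gcongr
        exact intervalIntegral.integral_mono_interval hce hes le_rfl
          (Filter.Eventually.of_forall fun x => sq_nonneg (G x)) hint

theorem abs_pow_three_le_of_lipschitzOnWith_of_right {s d : ℝ} (hsd : s ≤ d)
    (hG : LipschitzOnWith K G (Icc s d)) (hGd : G d = 0) :
    |G s| ^ 3 ≤ 3 * K * ∫ x in s..d, G x ^ 2 := by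
  have hGneg : LipschitzOnWith K (fun x => G (-x)) (Icc (-d) (-s)) := by
    have h := hG.comp LipschitzWith.id.neg.lipschitzOnWith
      fun x (hx : x ∈ Icc (-d) (-s)) => ⟨le_neg.2 hx.2, neg_le.2 hx.1⟩
    rwa [mul_one] at h
  simpa [intervalIntegral.integral_comp_neg (fun x => G x ^ 2)] using
    abs_pow_three_le_of_lipschitzOnWith_of_left (neg_le_neg hsd) hGneg (by simpa)

theorem abs_pow_three_le_of_lipschitzOnWith {a b s : ℝ} (hG : LipschitzOnWith K G (Icc a b))
    (ha : G a = 0) (hb : G b = 0) (hs : s ∈ Icc a b) :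
    |G s| ^ 3 ≤ 3 * K / 2 * ∫ x in a..b, G x ^ 2 := by
  have hleft := abs_pow_three_le_of_lipschitzOnWith_of_left hs.1
    (hG.mono (Icc_subset_Icc le_rfl hs.2)) ha
  have hright := abs_pow_three_le_of_lipschitzOnWith_of_right hs.2
    (hG.mono (Icc_subset_Icc hs.1 le_rfl)) hb
  have hint : IntervalIntegrable (fun x => G x ^ 2) volume a b :=
    (hG.continuousOn.pow 2).intervalIntegrable_of_Icc (hs.1.trans hs.2)
  have hsub : ∀ p q, p ∈ Icc a b → q ∈ Icc a b → uIcc p q ⊆ uIcc a b := fun p q hp hq =>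
    uIcc_subset_uIcc (Icc_subset_uIcc hp) (Icc_subset_uIcc hq)
  rw [← intervalIntegral.integral_add_adjacent_intervals
    (hint.mono_set (hsub a s ⟨le_rfl, hs.1.trans hs.2⟩ hs))
    (hint.mono_set (hsub s b hs ⟨hs.1.trans hs.2, le_rfl⟩))]
  linarith

theorem integral_abs_pow_five_le_of_lipschitzOnWith {a b : ℝ} (hab : a ≤ b)
    (hG : LipschitzOnWith K G (Icc a b)) (ha : G a = 0) (hb : G b = 0) :
    ∫ x in a..b, |G x| ^ 5 ≤ 3 * K / 2 * (∫ x in a..b, G x ^ 2) ^ 2 := by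
  set I := ∫ x in a..b, G x ^ 2
  have hcont := hG.continuousOn
  calc ∫ x in a..b, |G x| ^ 5 = ∫ x in a..b, |G x| ^ 3 * G x ^ 2 := by
        congr 1 with x; rw [← sq_abs (G x)]; ring
    _ ≤ ∫ x in a..b, 3 * K / 2 * I * G x ^ 2 :=
        intervalIntegral.integral_mono_on hab
          ((hcont.abs.pow 3).mul (hcont.pow 2) |>.intervalIntegrable_of_Icc hab)
          ((hcont.pow 2).intervalIntegrable_of_Icc hab |>.const_mul _)
          fun x hx => mul_le_mul_of_nonneg_right
            (abs_pow_three_le_of_lipschitzOnWith hG ha hb hx) (sq_nonneg _)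
    _ = 3 * K / 2 * I ^ 2 := by rw [intervalIntegral.integral_const_mul]; ring

end LipschitzVanishing

theorem lipschitzOnWith_primitive {u : ℝ → ℝ} {a b M : ℝ} (hu : IntegrableOn u (Ioc a b))
    (hM : ∀ᵐ x ∂volume.restrict (Ioc a b), |u x| ≤ M) :
    LipschitzOnWith M.toNNReal (fun s => ∫ x in a..s, u x) (Icc a b) := by
  have hint : ∀ s ∈ Icc a b, IntervalIntegrable u volume a s := fun s hs =>
    (intervalIntegrable_iff_integrableOn_Ioc_of_le hs.1).2
      (hu.mono_set (Ioc_subset_Ioc le_rfl hs.2))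
  rw [ae_restrict_iff' measurableSet_Ioc] at hM
  refine LipschitzOnWith.of_dist_le_mul fun x hx y hy => ?_
  rw [Real.dist_eq, Real.dist_eq,
    intervalIntegral.integral_interval_sub_left (hint x hx) (hint y hy)]
  refine (intervalIntegral.norm_integral_le_of_norm_le_const_ae (f := u) ?_).trans
    (mul_le_mul_of_nonneg_right (Real.le_coe_toNNReal M) (abs_nonneg _))
  filter_upwards [hM] with z hz hzI
  exact hz ⟨(le_min hy.1 hx.1).trans_lt hzI.1, hzI.2.trans (max_le hy.2 hx.2)⟩

theorem stmt2 (t : ℝ) (ht : 0 < t) (u : ℝ → ℝ) (M : ℝ)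
    (hu : IntegrableOn u (Set.Ioc 0 t))
    (hbound : ∀ᵐ s ∂(volume.restrict (Set.Ioc 0 t)), |u s| ≤ M)
    (hzero : (∫ x in (0:ℝ)..t, u x) = 0) :
    (∫ s in (0:ℝ)..t, |∫ x in (0:ℝ)..s, u x| ^ 5) ≤
      3 * M * (∫ s in (0:ℝ)..t, (∫ x in (0:ℝ)..s, u x) ^ 2) ^ 2 := by
  have hM : 0 ≤ M := by
    have : (ae (volume.restrict (Set.Ioc 0 t))).NeBot := by
      rw [ae_neBot, Ne, Measure.restrict_eq_zero, Real.volume_Ioc]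
      simpa using ht
    obtain ⟨s, hs⟩ := hbound.exists
    exact (abs_nonneg _).trans hs
  have h := integral_abs_pow_five_le_of_lipschitzOnWith ht.le
    (lipschitzOnWith_primitive hu hbound) intervalIntegral.integral_same hzero
  rw [Real.coe_toNNReal M hM] at h
  refine h.trans (mul_le_mul_of_nonneg_right ?_ (sq_nonneg _))
  linarith
end

section
/- There exists C > 0 such that for every t > 0 and every bounded measurable u : (0,t) → ℝ, ‖u₁‖_{L⁸}⁸ ≤ C t |u₁(t)|⁸ + C ‖u‖_{L^∞}² ξ_D(t,u), where ξ_D(t,u) = (1/72) ∫₀ᵗ (∫₀ˢ u₁³)² ds and u₁ is the primitive of u vanishing at 0. -/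
open MeasureTheory Set

/-! With `F` the primitive of `u` and `V` the primitive of `F ^ 3`, integration by parts
(`F` is absolutely continuous with `F' = u` a.e.) gives `∫ F ^ 8 = F(t) ^ 5 V(t) - 5 ∫ u F ^ 4 V`.
Young's inequality `a ^ 5 b ^ 3 ≤ 8 a ^ 8 + b ^ 8 / 32` bounds the boundary term by
`8 t F(t) ^ 8 + ∫ F ^ 8 / 32`, and `2 x y ≤ x ^ 2 + y ^ 2` with `x = F ^ 4 / 2`, `y = 5 M |V|`
bounds the other one by `∫ F ^ 8 / 4 + 25 M ^ 2 ∫ V ^ 2`. Absorbing these fractions of `∫ F ^ 8`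
into the left-hand side leaves `∫ F ^ 8 ≤ (256 t F(t) ^ 8 + 800 M ^ 2 ∫ V ^ 2) / 23`,
whence `C = 3600`. -/

theorem AbsolutelyContinuousOnInterval.pow_succ {f : ℝ → ℝ} {a b : ℝ}
    (hf : AbsolutelyContinuousOnInterval f a b) (n : ℕ) :
    AbsolutelyContinuousOnInterval (fun x => f x ^ (n + 1)) a b := by
  induction n with
  | zero => simpa using hf
  | succ n ih => simpa only [← _root_.pow_succ] using ih.fun_mul hf

theorem IntervalIntegrable.ae_hasDerivAt_primitive {u : ℝ → ℝ} {a b : ℝ}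
    (hu : IntervalIntegrable u volume a b) :
    ∀ᵐ x, x ∈ uIcc a b → HasDerivAt (fun s => ∫ y in a..s, u y) (u x) x := by
  filter_upwards [hu.ae_hasDerivAt_integral] with x hx hxI using hx hxI a left_mem_uIcc

theorem AbsolutelyContinuousOnInterval.integral_mul_eq_sub_integral_deriv_mul_primitive
    {f g : ℝ → ℝ} {a b : ℝ} (hf : AbsolutelyContinuousOnInterval f a b)
    (hg : IntervalIntegrable g volume a b) :
    ∫ x in a..b, f x * g x =
      f b * (∫ y in a..b, g y) - ∫ x in a..b, deriv f x * ∫ y in a..x, g y := by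
  have hG := hg.absolutelyContinuousOnInterval_intervalIntegral left_mem_uIcc
  have hparts := hf.integral_mul_deriv_eq_deriv_mul hG
  simp only [intervalIntegral.integral_same, mul_zero, sub_zero] at hparts
  rw [← hparts]
  refine intervalIntegral.integral_congr_ae ?_
  filter_upwards [hg.ae_hasDerivAt_primitive] with x hx hxI
  rw [(hx (uIoc_subset_uIcc hxI)).deriv]

theorem integral_primitive_pow_eq {u : ℝ → ℝ} {t : ℝ} (hu : IntervalIntegrable u volume 0 t)
    (m n : ℕ) :
    ∫ s in 0..t, (∫ x in 0..s, u x) ^ (m + 1 + n) =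
      (∫ x in 0..t, u x) ^ (m + 1) * (∫ s in 0..t, (∫ x in 0..s, u x) ^ n)
        - (m + 1) * ∫ s in 0..t,
            u s * (∫ x in 0..s, u x) ^ m * ∫ x in 0..s, (∫ y in 0..x, u y) ^ n := by
  have hF := hu.absolutelyContinuousOnInterval_intervalIntegral left_mem_uIcc
  have hparts := (hF.pow_succ m).integral_mul_eq_sub_integral_deriv_mul_primitive
    (hF.continuousOn.fun_pow n).intervalIntegrable
  simp_rw [pow_add _ (m + 1) n]
  rw [hparts, ← intervalIntegral.integral_const_mul ((m : ℝ) + 1)]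
  congr 1
  refine intervalIntegral.integral_congr_ae ?_
  filter_upwards [hu.ae_hasDerivAt_primitive] with x hx hxI
  rw [((hx (uIoc_subset_uIcc hxI)).fun_pow (m + 1)).deriv]
  push_cast
  ring

theorem pow_five_mul_pow_three_le {a b : ℝ} (ha : 0 ≤ a) (hb : 0 ≤ b) :
    a ^ 5 * b ^ 3 ≤ 8 * a ^ 8 + b ^ 8 / 32 := by
  rcases le_or_gt b (2 * a) with h | h
  · nlinarith [pow_nonneg ha 5, pow_nonneg hb 3, pow_nonneg ha 8, pow_nonneg hb 8,
      mul_le_mul_of_nonneg_left (pow_le_pow_left₀ hb h 3) (pow_nonneg ha 5)]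
  · have h1 : (2 * a) ^ 5 ≤ b ^ 5 := pow_le_pow_left₀ (by linarith) h.le 5
    nlinarith [mul_le_mul_of_nonneg_right h1 (pow_nonneg hb 3), pow_nonneg hb 8,
      pow_nonneg ha 8]

theorem abs_pow_five_mul_integral_pow_three_le {f : ℝ → ℝ} {a b : ℝ} (hab : a ≤ b)
    (hf : ContinuousOn f (uIcc a b)) (c : ℝ) :
    |c ^ 5 * ∫ s in a..b, f s ^ 3| ≤ 8 * (b - a) * c ^ 8 + (∫ s in a..b, f s ^ 8) / 32 := by
  calc |c ^ 5 * ∫ s in a..b, f s ^ 3|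
      ≤ |c| ^ 5 * ∫ s in a..b, |f s| ^ 3 := by
        rw [abs_mul, abs_pow]
        gcongr
        have h := intervalIntegral.abs_integral_le_integral_abs
          (f := fun s => f s ^ 3) (μ := volume) hab
        simp only [abs_pow] at h
        exact h
    _ = ∫ s in a..b, |c| ^ 5 * |f s| ^ 3 := (intervalIntegral.integral_const_mul _ _).symm
    _ ≤ ∫ s in a..b, (8 * c ^ 8 + f s ^ 8 / 32) := by
        refine intervalIntegral.integral_mono_on hab
          ((hf.abs.fun_pow 3).intervalIntegrable.const_mul _)
          (intervalIntegrable_const.add ((hf.fun_pow 8).intervalIntegrable.div_const _)) ?_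
        intro s _
        simpa only [← (by decide : Even 8).pow_abs c, ← (by decide : Even 8).pow_abs (f s)]
          using pow_five_mul_pow_three_le (abs_nonneg c) (abs_nonneg (f s))
    _ = 8 * (b - a) * c ^ 8 + (∫ s in a..b, f s ^ 8) / 32 := by
        rw [intervalIntegral.integral_add intervalIntegrable_const
          ((hf.fun_pow 8).intervalIntegrable.div_const _), intervalIntegral.integral_const,
          intervalIntegral.integral_div, smul_eq_mul]
        ring

theorem five_mul_abs_integral_mul_pow_four_mul_le {u f g : ℝ → ℝ} {a b M : ℝ} (hab : a ≤ b)
    (hu : IntervalIntegrable u volume a b) (hf : ContinuousOn f (uIcc a b))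
    (hg : ContinuousOn g (uIcc a b)) (hM : ∀ᵐ s ∂(volume.restrict (Ioc a b)), |u s| ≤ M) :
    5 * |∫ s in a..b, u s * f s ^ 4 * g s|
      ≤ (∫ s in a..b, f s ^ 8) / 4 + 25 * M ^ 2 * ∫ s in a..b, g s ^ 2 := by
  have hint : IntervalIntegrable (fun s => u s * f s ^ 4 * g s) volume a b := by
    simpa only [mul_assoc] using hu.mul_continuousOn ((hf.fun_pow 4).fun_mul hg)
  have hpoint : ∀ᵐ s ∂(volume.restrict (Ioc a b)),
      5 * |u s * f s ^ 4 * g s| ≤ f s ^ 8 / 4 + 25 * M ^ 2 * g s ^ 2 := by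
    filter_upwards [hM] with s hs
    rw [abs_mul, abs_mul, abs_of_nonneg (by positivity : 0 ≤ f s ^ 4), ← sq_abs (g s)]
    nlinarith [sq_nonneg (f s ^ 4 - 10 * M * |g s|),
      mul_le_mul_of_nonneg_right hs (mul_nonneg (by positivity : 0 ≤ f s ^ 4) (abs_nonneg (g s)))]
  calc 5 * |∫ s in a..b, u s * f s ^ 4 * g s|
      ≤ ∫ s in a..b, 5 * |u s * f s ^ 4 * g s| := by
        rw [intervalIntegral.integral_const_mul]
        gcongr
        exact intervalIntegral.abs_integral_le_integral_abs hab
    _ ≤ ∫ s in a..b, (f s ^ 8 / 4 + 25 * M ^ 2 * g s ^ 2) := by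
        simp only [intervalIntegral.integral_of_le hab]
        exact setIntegral_mono_ae_restrict (hint.abs.const_mul 5).1
          (((hf.fun_pow 8).intervalIntegrable.div_const _).add
            ((hg.fun_pow 2).intervalIntegrable.const_mul _)).1 hpoint
    _ = (∫ s in a..b, f s ^ 8) / 4 + 25 * M ^ 2 * ∫ s in a..b, g s ^ 2 := by
        rw [intervalIntegral.integral_add ((hf.fun_pow 8).intervalIntegrable.div_const _)
          ((hg.fun_pow 2).intervalIntegrable.const_mul _), intervalIntegral.integral_div,
          intervalIntegral.integral_const_mul]

theorem stmt5 :
    ∃ C : ℝ, 0 < C ∧ ∀ t : ℝ, 0 < t → ∀ u : ℝ → ℝ, ∀ M : ℝ, Measurable u →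
      (∀ᵐ s ∂(volume.restrict (Set.Ioc 0 t)), |u s| ≤ M) →
      (∫ s in (0:ℝ)..t, (∫ x in (0:ℝ)..s, u x) ^ 8) ≤
        C * t * |∫ x in (0:ℝ)..t, u x| ^ 8 +
        C * M ^ 2 *
          ((1/72 : ℝ) * ∫ s in (0:ℝ)..t, (∫ x in (0:ℝ)..s, (∫ y in (0:ℝ)..x, u y) ^ 3) ^ 2) := by
  refine ⟨3600, by norm_num, fun t ht u M hu hM => ?_⟩
  have hu_int : IntervalIntegrable u volume 0 t :=
    (intervalIntegrable_iff_integrableOn_Ioc_of_le ht.le).2 <|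
      (integrable_const M).mono' hu.aestronglyMeasurable.restrict hM
  have hF : ContinuousOn (fun s => ∫ x in 0..s, u x) (uIcc 0 t) :=
    (hu_int.absolutelyContinuousOnInterval_intervalIntegral left_mem_uIcc).continuousOn
  have hV : ContinuousOn (fun s => ∫ x in 0..s, (∫ y in 0..x, u y) ^ 3) (uIcc 0 t) :=
    ((hF.fun_pow 3).intervalIntegrable.absolutelyContinuousOnInterval_intervalIntegral
      left_mem_uIcc).continuousOn
  have hparts := integral_primitive_pow_eq hu_int 4 3
  have hboundary := abs_pow_five_mul_integral_pow_three_le ht.le hF (∫ x in 0..t, u x)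
  have hbulk := five_mul_abs_integral_mul_pow_four_mul_le ht.le hu_int hF hV hM
  have hξ : 0 ≤ ∫ s in 0..t, (∫ x in 0..s, (∫ y in 0..x, u y) ^ 3) ^ 2 :=
    intervalIntegral.integral_nonneg ht.le fun s _ => sq_nonneg _
  norm_num only at hparts
  rw [(by decide : Even 8).pow_abs]
  linarith [le_abs_self ((∫ x in 0..t, u x) ^ 5 * ∫ s in 0..t, (∫ x in 0..s, u x) ^ 3),
    neg_abs_le
      (∫ s in 0..t, u s * (∫ x in 0..s, u x) ^ 4 * ∫ x in 0..s, (∫ y in 0..x, u y) ^ 3),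
    mul_nonneg ht.le ((by decide : Even 8).pow_nonneg (∫ x in 0..t, u x)),
    mul_nonneg (sq_nonneg M) hξ]
end

section
/- There exists C > 0 such that for every t > 0 and every bounded measurable u : (0,t) → ℝ, ‖u₁‖_{L⁴}⁴ ≤ C ‖u‖_{L^∞}² ‖u₂‖_{L²}², where u₁ and u₂ are the first and second iterated primitives of u vanishing at 0. -/
/-!
Integrating `(u₂ u₁³)' = u₁⁴ + 3 u u₁² u₂` over `[0, t]` gives
`∫ u₁⁴ = u₁(t)³ u₂(t) - 3 ∫ u u₁² u₂`, and by Young's inequality the last integral is at most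
`¼ ∫ u₁⁴ + 9 M² ∫ u₂²`. The boundary term is controlled by lower bounds near `t`. With
`a = |u₁(t)|` and `b = |u₂(t)|`: since `u₁` is `M`-Lipschitz, `|u₁| ≥ a / 2` on an interval of
length `a / (2M)`, so `a⁵ ≤ 32 M ∫ u₁⁴`; and `|u₂| ≥ b / 2` on `[t - h, t]` whenever
`h (a + M h) ≤ b / 2`, so `b² h ≤ 4 ∫ u₂²`. Taking `h = b / (4a)` or `h = √(b / (4M))`, whichever
is smaller, and AM-GM give `a³ b ≤ ⅔ ∫ u₁⁴ + C M² ∫ u₂²`; since `⅔ + ¼ < 1`, the term `∫ u₁⁴`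
on the right is absorbed by the left.
-/

open MeasureTheory

/-- Iterated primitives of `u` vanishing (iteratively) at `0`. -/
noncomputable def iterPrim (u : ℝ → ℝ) : ℕ → ℝ → ℝ
  | 0 => u
  | (k+1) => fun s => ∫ x in (0:ℝ)..s, iterPrim u k x

open Set intervalIntegral
open scoped Interval

lemma mul_le_intervalIntegral_of_le_on_right {g : ℝ → ℝ} {a b c h : ℝ} (hh : 0 ≤ h)
    (hab : a ≤ b - h) (hg : IntervalIntegrable g volume a b) (hg0 : ∀ x ∈ Icc a b, 0 ≤ g x)
    (hc : ∀ x ∈ Icc (b - h) b, c ≤ g x) :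
    c * h ≤ ∫ x in a..b, g x := by
  have hleft : 0 ≤ ∫ x in a..b - h, g x :=
    integral_nonneg hab fun x hx => hg0 x ⟨hx.1, by linarith [hx.2]⟩
  have hright : ∫ _ in b - h..b, c ≤ ∫ x in b - h..b, g x :=
    integral_mono_on (by linarith) intervalIntegrable_const
      (hg.mono_set (uIcc_subset_uIcc (mem_uIcc_of_le hab (by linarith)) right_mem_uIcc)) hc
  rw [intervalIntegral.integral_const, smul_eq_mul, sub_sub_cancel] at hright
  rw [← integral_add_adjacent_intervals
    (hg.mono_set (uIcc_subset_uIcc left_mem_uIcc (mem_uIcc_of_le hab (by linarith))))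
    (hg.mono_set (uIcc_subset_uIcc (mem_uIcc_of_le hab (by linarith)) right_mem_uIcc))]
  linarith

lemma abs_pow_five_le_mul_integral_pow_four {f : ℝ → ℝ} {M t : ℝ} (ht : 0 < t)
    (hf : ContinuousOn f (Icc 0 t)) (hf0 : f 0 = 0)
    (hlip : ∀ x ∈ Icc 0 t, |f t - f x| ≤ M * (t - x)) :
    |f t| ^ 5 ≤ 32 * M * ∫ x in (0 : ℝ)..t, f x ^ 4 := by
  have haM : |f t| ≤ M * t := by simpa [hf0] using hlip 0 ⟨le_rfl, ht.le⟩
  have hF : 0 ≤ ∫ x in (0 : ℝ)..t, f x ^ 4 := integral_nonneg ht.le fun x _ => by positivity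
  rcases (abs_nonneg (f t)).eq_or_lt with ha | ha
  · have hM : 0 ≤ M := by nlinarith
    rw [← ha, zero_pow (by norm_num)]
    positivity
  have hM : 0 < M := by nlinarith
  have hδ : |f t| / (2 * M) ≤ t / 2 := by rw [div_le_iff₀ (by positivity)]; nlinarith
  have hlow : ∀ x ∈ Icc (t - |f t| / (2 * M)) t, (|f t| / 2) ^ 4 ≤ f x ^ 4 := by
    intro x hx
    have hMx : M * (t - x) ≤ |f t| / 2 := by
      rw [← le_div_iff₀' hM, div_div]
      linarith [hx.1]
    rw [← Even.pow_abs (n := 4) (by decide) (f x)]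
    have := hlip x ⟨by linarith [hx.1], hx.2⟩
    exact pow_le_pow_left₀ (by positivity) (by linarith [abs_sub_abs_le_abs_sub (f t) (f x)]) 4
  have hI := mul_le_intervalIntegral_of_le_on_right (by positivity) (by linarith)
    ((hf.fun_pow 4).intervalIntegrable_of_Icc ht.le) (fun x _ => by positivity) hlow
  calc |f t| ^ 5 = 32 * M * ((|f t| / 2) ^ 4 * (|f t| / (2 * M))) := by field_simp; ring
    _ ≤ 32 * M * ∫ x in (0 : ℝ)..t, f x ^ 4 := by gcongr

lemma sq_half_abs_mul_le_integral_sq {g : ℝ → ℝ} {a M t h : ℝ} (ht : 0 ≤ t) (ha : 0 ≤ a)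
    (hM : 0 ≤ M) (hh : 0 ≤ h) (hg : ContinuousOn g (Icc 0 t)) (hg0 : g 0 = 0)
    (hdiff : ∀ x ∈ Icc 0 t, |g t - g x| ≤ (t - x) * (a + M * (t - x)))
    (hha : h * (a + M * h) ≤ |g t| / 2) :
    (|g t| / 2) ^ 2 * h ≤ ∫ x in (0 : ℝ)..t, g x ^ 2 := by
  have hG : 0 ≤ ∫ x in (0 : ℝ)..t, g x ^ 2 := integral_nonneg ht fun x _ => by positivity
  rcases le_or_gt h t with hht | hht
  · refine mul_le_intervalIntegral_of_le_on_right hh (by linarith)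
      ((hg.fun_pow 2).intervalIntegrable_of_Icc ht) (fun x _ => by positivity) fun x hx => ?_
    have hxt : t - x ≤ h := by linarith [hx.1]
    have hx0 : 0 ≤ t - x := by linarith [hx.2]
    have hdx := hdiff x ⟨by linarith [hx.1], hx.2⟩
    have : (t - x) * (a + M * (t - x)) ≤ h * (a + M * h) := by gcongr
    rw [← sq_abs (g x)]
    exact pow_le_pow_left₀ (by positivity) (by linarith [abs_sub_abs_le_abs_sub (g t) (g x)]) 2
  · have hbt : |g t| ≤ t * (a + M * t) := by simpa [hg0] using hdiff 0 ⟨le_rfl, ht⟩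
    have : t * (a + M * t) ≤ h * (a + M * h) := by gcongr
    have hb : |g t| = 0 := by linarith [abs_nonneg (g t)]
    rw [hb]
    simpa using hG

lemma neg_three_mul_le_of_abs_le {v p q M : ℝ} (hv : |v| ≤ M) :
    -(3 * (v * p ^ 2 * q)) ≤ p ^ 4 / 4 + 9 * M ^ 2 * q ^ 2 := by
  have hvq : -(v * q) ≤ M * |q| := by
    calc -(v * q) ≤ |v| * |q| := by rw [← abs_mul]; exact neg_le_abs _
      _ ≤ M * |q| := by gcongr
  nlinarith [sq_nonneg (p ^ 2 / 2 - 3 * M * |q|), sq_abs q, sq_nonneg p]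

lemma le_arith_mean_of_pow_three_le_sq_mul {x y z : ℝ} (hx : 0 ≤ x) (hy : 0 ≤ y) (hz : 0 ≤ z)
    (h : x ^ 3 ≤ y ^ 2 * z) : x ≤ (2 * y + z) / 3 := by
  refine (pow_le_pow_iff_left₀ hx (by positivity) three_ne_zero).1 (h.trans ?_)
  nlinarith [mul_nonneg (sq_nonneg (z - y)) (by linarith : (0 : ℝ) ≤ z + 8 * y)]

section BoundaryTerm

variable {a b M F G : ℝ}

lemma pow_three_mul_le_of_mul_le_sq (ha : 0 < a) (hb : 0 < b) (hF : 0 ≤ F) (hG : 0 ≤ G)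
    (hFa : a ^ 5 ≤ 32 * M * F)
    (hGb : ∀ h, 0 ≤ h → h * (a + M * h) ≤ b / 2 → (b / 2) ^ 2 * h ≤ G)
    (hab : M * b ≤ 4 * a ^ 2) :
    a ^ 3 * b ≤ (2 * F + 16384 * M ^ 2 * G) / 3 := by
  have hMh : M * (b / (4 * a)) ≤ a := by
    rw [mul_div_assoc', div_le_iff₀ (by positivity)]
    nlinarith
  have hGb' := hGb (b / (4 * a)) (by positivity) <| calc
    b / (4 * a) * (a + M * (b / (4 * a))) ≤ b / (4 * a) * (2 * a) := by gcongr; linarith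
    _ = b / 2 := by field_simp; ring
  have hb3 : b ^ 3 ≤ 16 * a * G := by
    calc b ^ 3 = 16 * a * ((b / 2) ^ 2 * (b / (4 * a))) := by field_simp; ring
      _ ≤ 16 * a * G := by gcongr
  refine le_arith_mean_of_pow_three_le_sq_mul (by positivity) hF (by positivity) ?_
  calc (a ^ 3 * b) ^ 3 = a ^ 9 * b ^ 3 := by ring
    _ ≤ a ^ 9 * (16 * a * G) := by gcongr
    _ = 16 * (a ^ 5) ^ 2 * G := by ring
    _ ≤ 16 * (32 * M * F) ^ 2 * G := by gcongr
    _ = F ^ 2 * (16384 * M ^ 2 * G) := by ring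

lemma pow_three_mul_le_of_sq_le_mul (ha : 0 ≤ a) (hb : 0 < b) (hM : 0 < M) (hG : 0 ≤ G)
    (hGb : ∀ h, 0 ≤ h → h * (a + M * h) ≤ b / 2 → (b / 2) ^ 2 * h ≤ G)
    (hab : 4 * a ^ 2 ≤ M * b) :
    a ^ 3 * b ≤ M ^ 2 * G := by
  set h := √(b / (4 * M))
  have hh2 : h ^ 2 = b / (4 * M) := Real.sq_sqrt (by positivity)
  have hMh : M * h ^ 2 = b / 4 := by rw [hh2]; field_simp
  have hha : h * a ≤ b / 4 := by
    refine (pow_le_pow_iff_left₀ (by positivity) (by positivity) two_ne_zero).1 ?_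
    calc (h * a) ^ 2 = b / (4 * M) * a ^ 2 := by rw [mul_pow, hh2]
      _ ≤ b / (4 * M) * (M * b / 4) := by gcongr; linarith
      _ = (b / 4) ^ 2 := by field_simp
  have hGb' := hGb h (Real.sqrt_nonneg _) (by linarith [mul_add h a (M * h)])
  have hb5 : b ^ 5 ≤ 64 * M * G ^ 2 := by
    calc b ^ 5 = 64 * M * ((b / 2) ^ 2 * h) ^ 2 := by rw [mul_pow, ← pow_mul, hh2]; field_simp; ring
      _ ≤ 64 * M * G ^ 2 := by gcongr
  refine (pow_le_pow_iff_left₀ (by positivity) (by positivity) two_ne_zero).1 ?_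
  calc (a ^ 3 * b) ^ 2 = (a ^ 2) ^ 3 * b ^ 2 := by ring
    _ ≤ (M * b / 4) ^ 3 * b ^ 2 := by gcongr; linarith
    _ = M ^ 3 * b ^ 5 / 64 := by ring
    _ ≤ M ^ 3 * (64 * M * G ^ 2) / 64 := by gcongr
    _ = (M ^ 2 * G) ^ 2 := by ring

lemma pow_three_mul_le_of_pow_five_le (ha : 0 ≤ a) (hb : 0 ≤ b) (hF : 0 ≤ F) (hG : 0 ≤ G)
    (hFa : a ^ 5 ≤ 32 * M * F)
    (hGb : ∀ h, 0 ≤ h → h * (a + M * h) ≤ b / 2 → (b / 2) ^ 2 * h ≤ G) :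
    a ^ 3 * b ≤ 2 / 3 * F + 16384 / 3 * M ^ 2 * G := by
  rcases ha.eq_or_lt with rfl | ha
  · rw [zero_pow three_ne_zero, zero_mul]
    positivity
  rcases hb.eq_or_lt with rfl | hb
  · simp only [mul_zero]
    positivity
  have hM : 0 < M := by
    by_contra! hM
    nlinarith [pow_pos ha 5, mul_nonneg (neg_nonneg.2 hM) hF]
  rcases le_total (M * b) (4 * a ^ 2) with hab | hab
  · linarith [pow_three_mul_le_of_mul_le_sq ha hb hF hG hFa hGb hab]
  · nlinarith [pow_three_mul_le_of_sq_le_mul ha.le hb hM hG hGb hab, mul_nonneg (sq_nonneg M) hG]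

end BoundaryTerm

namespace iterPrim

variable {u : ℝ → ℝ} {k : ℕ} {M t : ℝ}

@[simp]
lemma succ_apply_zero (u : ℝ → ℝ) (k : ℕ) : iterPrim u (k + 1) 0 = 0 :=
  integral_same

lemma succ_sub_succ {x y : ℝ} (hx : IntervalIntegrable (iterPrim u k) volume 0 x)
    (hy : IntervalIntegrable (iterPrim u k) volume 0 y) :
    iterPrim u (k + 1) y - iterPrim u (k + 1) x = ∫ s in x..y, iterPrim u k s :=
  integral_interval_sub_left hy hx

lemma absolutelyContinuousOnInterval_succ
    (h : IntervalIntegrable (iterPrim u k) volume 0 t) :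
    AbsolutelyContinuousOnInterval (iterPrim u (k + 1)) 0 t :=
  h.absolutelyContinuousOnInterval_intervalIntegral left_mem_uIcc

lemma intervalIntegrable_succ (h : IntervalIntegrable (iterPrim u k) volume 0 t) :
    IntervalIntegrable (iterPrim u (k + 1)) volume 0 t :=
  (absolutelyContinuousOnInterval_succ h).continuousOn.intervalIntegrable

lemma continuousOn_succ (h : IntervalIntegrable (iterPrim u k) volume 0 t) (ht : 0 ≤ t) :
    ContinuousOn (iterPrim u (k + 1)) (Icc 0 t) :=
  uIcc_of_le ht ▸ (absolutelyContinuousOnInterval_succ h).continuousOn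

lemma ae_hasDerivAt_succ (h : IntervalIntegrable (iterPrim u k) volume 0 t) :
    ∀ᵐ x, x ∈ uIcc 0 t → HasDerivAt (iterPrim u (k + 1)) (iterPrim u k x) x := by
  filter_upwards [h.ae_hasDerivAt_integral] with x hx hxt using hx hxt 0 left_mem_uIcc

lemma integral_one_pow_four (hu : IntervalIntegrable u volume 0 t) :
    ∫ s in (0 : ℝ)..t, iterPrim u 1 s ^ 4 =
      iterPrim u 1 t ^ 3 * iterPrim u 2 t -
        3 * ∫ s in (0 : ℝ)..t, u s * iterPrim u 1 s ^ 2 * iterPrim u 2 s := by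
  have hu₁ : IntervalIntegrable (iterPrim u 1) volume 0 t := intervalIntegrable_succ hu
  have ac₁ : AbsolutelyContinuousOnInterval (iterPrim u 1) 0 t :=
    absolutelyContinuousOnInterval_succ (k := 0) hu
  have hcube : AbsolutelyContinuousOnInterval (fun s => iterPrim u 1 s ^ 3) 0 t := by
    simpa only [pow_succ, pow_zero, one_mul] using (ac₁.fun_mul ac₁).fun_mul ac₁
  have ibp := hcube.integral_mul_deriv_eq_deriv_mul (absolutelyContinuousOnInterval_succ hu₁)
  have hderiv₂ : ∀ᵐ s, s ∈ Ι 0 t →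
      iterPrim u 1 s ^ 3 * deriv (iterPrim u 2) s = iterPrim u 1 s ^ 4 := by
    filter_upwards [ae_hasDerivAt_succ hu₁] with s hs hst
    rw [(hs (uIoc_subset_uIcc hst)).deriv]
    ring
  have hderiv₁ : ∀ᵐ s, s ∈ Ι 0 t → deriv (fun s => iterPrim u 1 s ^ 3) s * iterPrim u 2 s =
      3 * (u s * iterPrim u 1 s ^ 2 * iterPrim u 2 s) := by
    filter_upwards [ae_hasDerivAt_succ (k := 0) hu] with s hs hst
    rw [((hs (uIoc_subset_uIcc hst)).fun_pow 3).deriv]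
    simp only [iterPrim, Nat.cast_ofNat]
    ring
  rw [integral_congr_ae hderiv₂, integral_congr_ae hderiv₁,
    intervalIntegral.integral_const_mul] at ibp
  simpa using ibp

lemma abs_one_sub_one_le (hu : IntervalIntegrable u volume 0 t)
    (hM : ∀ᵐ s ∂volume.restrict (Ioc 0 t), |u s| ≤ M) {x y : ℝ} (hx : 0 ≤ x) (hxy : x ≤ y)
    (hy : y ≤ t) :
    |iterPrim u 1 y - iterPrim u 1 x| ≤ M * (y - x) := by
  have hbound : ∀ᵐ s, s ∈ Ι x y → ‖u s‖ ≤ M := by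
    filter_upwards [(ae_restrict_iff' measurableSet_Ioc).1 hM] with s hs hsxy
    rw [uIoc_of_le hxy] at hsxy
    exact hs ⟨hx.trans_lt hsxy.1, hsxy.2.trans hy⟩
  have hsub : ∀ {z}, 0 ≤ z → z ≤ t → uIcc 0 z ⊆ uIcc 0 t := fun h0 hz =>
    uIcc_subset_uIcc_left (mem_uIcc_of_le h0 hz)
  have := intervalIntegral.norm_integral_le_of_norm_le_const_ae hbound
  rw [abs_of_nonneg (sub_nonneg.2 hxy)] at this
  rwa [succ_sub_succ (k := 0) (hu.mono_set (hsub hx (hxy.trans hy)))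
    (hu.mono_set (hsub (hx.trans hxy) hy))]

lemma abs_one_le (hu : IntervalIntegrable u volume 0 t)
    (hM : ∀ᵐ s ∂volume.restrict (Ioc 0 t), |u s| ≤ M) {x : ℝ} (hx : 0 ≤ x) (hxt : x ≤ t) :
    |iterPrim u 1 x| ≤ M * x := by
  simpa using abs_one_sub_one_le hu hM le_rfl hx hxt

lemma abs_two_sub_two_le (hu : IntervalIntegrable u volume 0 t)
    (hM : ∀ᵐ s ∂volume.restrict (Ioc 0 t), |u s| ≤ M) {x : ℝ} (hx : 0 ≤ x) (hxt : x ≤ t) :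
    |iterPrim u 2 t - iterPrim u 2 x| ≤ (t - x) * (|iterPrim u 1 t| + M * (t - x)) := by
  have hu₁ : IntervalIntegrable (iterPrim u 1) volume 0 t := intervalIntegrable_succ hu
  have hbound : ∀ s ∈ Ι x t, ‖iterPrim u 1 s‖ ≤ |iterPrim u 1 t| + M * (t - x) := by
    intro s hs
    rw [uIoc_of_le hxt] at hs
    have hxt' := abs_one_sub_one_le hu hM hx hxt le_rfl
    have hst := abs_one_sub_one_le hu hM (hx.trans hs.1.le) hs.2 le_rfl
    have hM0 : 0 ≤ M :=
      (mul_nonneg_iff_of_pos_right (sub_pos.2 (hs.1.trans_le hs.2))).1 ((abs_nonneg _).trans hxt')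
    calc ‖iterPrim u 1 s‖ ≤ |iterPrim u 1 t| + |iterPrim u 1 t - iterPrim u 1 s| := by
          rw [Real.norm_eq_abs, abs_sub_comm]
          linarith [abs_sub_abs_le_abs_sub (iterPrim u 1 s) (iterPrim u 1 t)]
      _ ≤ |iterPrim u 1 t| + M * (t - x) := by
          gcongr
          exact hst.trans (by gcongr; linarith [hs.1])
  have := intervalIntegral.norm_integral_le_of_norm_le_const hbound
  rwa [abs_of_nonneg (sub_nonneg.2 hxt), mul_comm, ← succ_sub_succ
    (hu₁.mono_set (uIcc_subset_uIcc_left (mem_uIcc_of_le hx hxt))) hu₁] at this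

lemma abs_one_pow_five_le_mul_integral (ht : 0 < t) (hu : IntervalIntegrable u volume 0 t)
    (hM : ∀ᵐ s ∂volume.restrict (Ioc 0 t), |u s| ≤ M) :
    |iterPrim u 1 t| ^ 5 ≤ 32 * M * ∫ s in (0 : ℝ)..t, iterPrim u 1 s ^ 4 :=
  abs_pow_five_le_mul_integral_pow_four ht (continuousOn_succ (k := 0) hu ht.le)
    (succ_apply_zero u 0) fun _ hx => abs_one_sub_one_le hu hM hx.1 hx.2 le_rfl

lemma sq_half_abs_two_mul_le_integral (ht : 0 < t) (hu : IntervalIntegrable u volume 0 t)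
    (hM : ∀ᵐ s ∂volume.restrict (Ioc 0 t), |u s| ≤ M) {h : ℝ} (hh : 0 ≤ h)
    (hha : h * (|iterPrim u 1 t| + M * h) ≤ |iterPrim u 2 t| / 2) :
    (|iterPrim u 2 t| / 2) ^ 2 * h ≤ ∫ s in (0 : ℝ)..t, iterPrim u 2 s ^ 2 := by
  have hM0 : 0 ≤ M := by nlinarith [abs_one_le hu hM ht.le le_rfl, abs_nonneg (iterPrim u 1 t)]
  exact sq_half_abs_mul_le_integral_sq ht.le (abs_nonneg _) hM0 hh
    (continuousOn_succ (intervalIntegrable_succ hu) ht.le) (succ_apply_zero u 1)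
    (fun _ hx => abs_two_sub_two_le hu hM hx.1 hx.2) hha

lemma neg_three_mul_integral_le (ht : 0 ≤ t) (hu : IntervalIntegrable u volume 0 t)
    (hM : ∀ᵐ s ∂volume.restrict (Ioc 0 t), |u s| ≤ M) :
    -(3 * ∫ s in (0 : ℝ)..t, u s * iterPrim u 1 s ^ 2 * iterPrim u 2 s) ≤
      (∫ s in (0 : ℝ)..t, iterPrim u 1 s ^ 4) / 4 +
        9 * M ^ 2 * ∫ s in (0 : ℝ)..t, iterPrim u 2 s ^ 2 := by
  have hu₁ : IntervalIntegrable (iterPrim u 1) volume 0 t := intervalIntegrable_succ hu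
  have hc₁ := continuousOn_succ (k := 0) hu ht
  have hc₂ := continuousOn_succ hu₁ ht
  have hR : IntervalIntegrable (fun s => u s * iterPrim u 1 s ^ 2 * iterPrim u 2 s) volume 0 t := by
    simpa only [mul_assoc] using hu.mul_continuousOn (uIcc_of_le ht ▸ (hc₁.fun_pow 2).mul hc₂)
  have hu₁pow : IntervalIntegrable (fun s => iterPrim u 1 s ^ 4) volume 0 t :=
    (hc₁.fun_pow 4).intervalIntegrable_of_Icc ht
  have hu₂sq : IntervalIntegrable (fun s => iterPrim u 2 s ^ 2) volume 0 t :=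
    (hc₂.fun_pow 2).intervalIntegrable_of_Icc ht
  have hpointwise : (fun s => -(3 * (u s * iterPrim u 1 s ^ 2 * iterPrim u 2 s)))
      ≤ᵐ[volume.restrict (Icc 0 t)] fun s => iterPrim u 1 s ^ 4 / 4 + 9 * M ^ 2 * iterPrim u 2 s ^ 2 := by
    rw [← Measure.restrict_congr_set Ioc_ae_eq_Icc]
    filter_upwards [hM] with s hs using neg_three_mul_le_of_abs_le hs
  calc -(3 * ∫ s in (0 : ℝ)..t, u s * iterPrim u 1 s ^ 2 * iterPrim u 2 s)
      = ∫ s in (0 : ℝ)..t, -(3 * (u s * iterPrim u 1 s ^ 2 * iterPrim u 2 s)) := by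
        rw [intervalIntegral.integral_neg, intervalIntegral.integral_const_mul]
    _ ≤ ∫ s in (0 : ℝ)..t, (iterPrim u 1 s ^ 4 / 4 + 9 * M ^ 2 * iterPrim u 2 s ^ 2) :=
        integral_mono_ae_restrict ht (hR.const_mul 3).neg
          ((hu₁pow.div_const 4).add (hu₂sq.const_mul _)) hpointwise
    _ = _ := by
        rw [intervalIntegral.integral_add (hu₁pow.div_const 4) (hu₂sq.const_mul _),
          intervalIntegral.integral_div, intervalIntegral.integral_const_mul]

end iterPrim

theorem stmt8 :
    ∃ C : ℝ, 0 < C ∧ ∀ t : ℝ, 0 < t → ∀ u : ℝ → ℝ, ∀ M : ℝ, Measurable u →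
      (∀ᵐ s ∂(volume.restrict (Set.Ioc 0 t)), |u s| ≤ M) →
      (∫ s in (0:ℝ)..t, (iterPrim u 1 s) ^ 4) ≤
        C * M ^ 2 * ∫ s in (0:ℝ)..t, (iterPrim u 2 s) ^ 2 := by
  refine ⟨65644, by norm_num, fun t ht u M hu hM => ?_⟩
  have hint : IntervalIntegrable u volume 0 t :=
    (intervalIntegrable_iff_integrableOn_Ioc_of_le ht.le).2
      (Measure.integrableOn_of_bounded measure_Ioc_lt_top.ne hu.aestronglyMeasurable hM)
  have hF : 0 ≤ ∫ s in (0 : ℝ)..t, iterPrim u 1 s ^ 4 :=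
    integral_nonneg ht.le fun s _ => by positivity
  have hG : 0 ≤ ∫ s in (0 : ℝ)..t, iterPrim u 2 s ^ 2 :=
    integral_nonneg ht.le fun s _ => by positivity
  have hboundary := pow_three_mul_le_of_pow_five_le (abs_nonneg _) (abs_nonneg _) hF hG
    (iterPrim.abs_one_pow_five_le_mul_integral ht hint hM)
    fun _ hh => iterPrim.sq_half_abs_two_mul_le_integral ht hint hM hh
  have hsign : iterPrim u 1 t ^ 3 * iterPrim u 2 t ≤ |iterPrim u 1 t| ^ 3 * |iterPrim u 2 t| := by
    rw [← abs_pow, ← abs_mul]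
    exact le_abs_self _
  linarith [iterPrim.integral_one_pow_four hint, iterPrim.neg_three_mul_integral_le ht.le hint hM]
end

section
/- There exists C > 0 such that for every t > 0 and every bounded measurable u : (0,t) → ℝ, ‖u₁‖_{L⁶}⁶ ≤ C ‖u‖_{L^∞}⁴ ‖u₃‖_{L²}², where u₁ and u₃ are the first and third iterated primitives of u vanishing at 0. -/
/-!
Write `F = u₃`, so that `F'' = u₁` is `M`-Lipschitz and vanishes at `0`. At a point `s` with
`c = F''(s) ≠ 0` look at the window `[s - ℓ, s]`, `ℓ = |c| / (2M) ≤ s / 2`, on which `F''`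
stays within `|c| / 2` of `c`. The bump `φ(r) = (r - s + ℓ)² (s - r)²` vanishes to second
order at both ends, so two integrations by parts give `∫ F φ'' = ∫ F'' φ`, of absolute value at
least `|c| ℓ⁵ / 60`, while `|φ''| ≤ 2ℓ²`; with AM-GM this yields `c² ℓ⁵ ≲ ∫_window F²`,
i.e. `c⁶ ℓ ≲ M⁴ ∫_window F²`.
Dividing by `ℓ(s)` and integrating in `s`, Tonelli reduces the theorem to the fact that, `ℓ`
being `1/2`-Lipschitz, the windows containing a point `r` end in `[r, r + 2ℓ(r)]` and have
length more than `2ℓ(r) / 3`.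
-/

open MeasureTheory

open Set intervalIntegral
open scoped NNReal ENNReal

noncomputable def bump (a b r : ℝ) : ℝ := (r - a) ^ 2 * (b - r) ^ 2

noncomputable def bumpDeriv (a b r : ℝ) : ℝ := 2 * (r - a) * (b - r) * (a + b - 2 * r)

noncomputable def bumpDeriv2 (a b r : ℝ) : ℝ :=
  2 * ((b - a) ^ 2 - 6 * (b - a) * (r - a) + 6 * (r - a) ^ 2)

theorem hasDerivAt_bump (a b r : ℝ) : HasDerivAt (bump a b) (bumpDeriv a b r) r := by
  have := (((hasDerivAt_id' r).sub_const a).pow 2).mul (((hasDerivAt_id' r).const_sub b).pow 2)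
  exact this.congr_deriv (by simp only [bumpDeriv, Pi.pow_apply]; push_cast; ring)

theorem hasDerivAt_bumpDeriv (a b r : ℝ) : HasDerivAt (bumpDeriv a b) (bumpDeriv2 a b r) r := by
  have := ((((hasDerivAt_id' r).sub_const a).const_mul 2).mul
    ((hasDerivAt_id' r).const_sub b)).mul (((hasDerivAt_id' r).const_mul 2).const_sub (a + b))
  exact this.congr_deriv (by simp only [bumpDeriv2, Pi.mul_apply]; ring)

theorem integral_bump (a b : ℝ) : ∫ r in a..b, bump a b r = (b - a) ^ 5 / 30 := by
  have h : ∀ r, HasDerivAt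
      (fun r => (r - a) ^ 5 / 5 - (b - a) * (r - a) ^ 4 / 2 + (b - a) ^ 2 * (r - a) ^ 3 / 3)
      (bump a b r) r := by
    intro r
    have := (((((hasDerivAt_id' r).sub_const a).pow 5).div_const 5).sub
      ((((hasDerivAt_id' r).sub_const a).pow 4).const_mul (b - a) |>.div_const 2)).add
      ((((hasDerivAt_id' r).sub_const a).pow 3).const_mul ((b - a) ^ 2) |>.div_const 3)
    exact this.congr_deriv (by simp only [bump]; push_cast; ring)
  rw [integral_eq_sub_of_hasDerivAt (fun r _ => h r)
    (Continuous.intervalIntegrable (by unfold bump; fun_prop) _ _)]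
  ring

theorem abs_bumpDeriv2_le {a b r : ℝ} (hr : r ∈ Icc a b) :
    |bumpDeriv2 a b r| ≤ 2 * (b - a) ^ 2 := by
  obtain ⟨h1, h2⟩ := hr
  rw [bumpDeriv2, abs_le]
  constructor <;>
    nlinarith [sq_nonneg (b + a - 2 * r), mul_nonneg (sub_nonneg.2 h1) (sub_nonneg.2 h2)]

theorem integral_mul_bumpDeriv2 {F F' F'' : ℝ → ℝ} (hF : ∀ x, HasDerivAt F (F' x) x)
    (hF' : ∀ x, HasDerivAt F' (F'' x) x) (hF'' : Continuous F'') (a b : ℝ) :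
    ∫ r in a..b, F r * bumpDeriv2 a b r = ∫ r in a..b, F'' r * bump a b r := by
  have hF'c : Continuous F' := continuous_iff_continuousAt.2 fun x => (hF' x).continuousAt
  rw [integral_mul_deriv_eq_deriv_mul (fun x _ => hF x) (fun x _ => hasDerivAt_bumpDeriv a b x)
      (hF'c.intervalIntegrable _ _)
      (Continuous.intervalIntegrable (by unfold bumpDeriv2; fun_prop) _ _),
    integral_mul_deriv_eq_deriv_mul (fun x _ => hF' x) (fun x _ => hasDerivAt_bump a b x)
      (hF''.intervalIntegrable _ _)
      (Continuous.intervalIntegrable (by unfold bumpDeriv; fun_prop) _ _)]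
  simp [bump, bumpDeriv]

theorem mul_le_abs_integral_mul_bump {f : ℝ → ℝ} {a b : ℝ} (hab : a ≤ b)
    (hf : ContinuousOn f (Icc a b)) (hfb : ∀ r ∈ Icc a b, |f r - f b| ≤ |f b| / 2) :
    |f b| * (b - a) ^ 5 / 60 ≤ |∫ r in a..b, f r * bump a b r| := by
  set c := f b
  rcases eq_or_ne c 0 with hc | hc
  · simp [hc]
  have hbump : ContinuousOn (bump a b) (Icc a b) := by unfold bump; fun_prop
  have key : c ^ 2 / 2 * ((b - a) ^ 5 / 30) ≤ c * ∫ r in a..b, f r * bump a b r := by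
    rw [← integral_bump, ← intervalIntegral.integral_const_mul,
      ← intervalIntegral.integral_const_mul]
    refine integral_mono_on hab ((continuousOn_const.mul hbump).intervalIntegrable_of_Icc hab)
      ((continuousOn_const.mul (hf.mul hbump)).intervalIntegrable_of_Icc hab) fun r hr => ?_
    have hfr : c ^ 2 / 2 ≤ c * f r := by
      have := neg_abs_le (c * (f r - c))
      rw [abs_mul] at this
      nlinarith [hfb r hr, abs_nonneg c, sq_abs c]
    have : 0 ≤ bump a b r := by unfold bump; positivity
    nlinarith
  refine le_of_mul_le_mul_left ?_ (abs_pos.2 hc)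
  calc |c| * (|c| * (b - a) ^ 5 / 60) = c ^ 2 / 2 * ((b - a) ^ 5 / 30) := by
        rw [← sq_abs c]; ring
    _ ≤ c * ∫ r in a..b, f r * bump a b r := key
    _ ≤ |c| * |∫ r in a..b, f r * bump a b r| := by rw [← abs_mul]; exact le_abs_self _

theorem abs_integral_mul_bumpDeriv2_le {f : ℝ → ℝ} {a b δ : ℝ} (hab : a ≤ b) (hδ : 0 < δ)
    (hf : ContinuousOn f (Icc a b)) :
    |∫ r in a..b, f r * bumpDeriv2 a b r| ≤
      (b - a) ^ 2 * ((∫ r in a..b, f r ^ 2) / δ + δ * (b - a)) := by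
  have hf2 : IntervalIntegrable (fun r => f r ^ 2) volume a b :=
    (hf.pow 2).intervalIntegrable_of_Icc hab
  calc |∫ r in a..b, f r * bumpDeriv2 a b r|
      ≤ ∫ r in a..b, |f r * bumpDeriv2 a b r| := abs_integral_le_integral_abs hab
    _ ≤ ∫ r in a..b, (b - a) ^ 2 * (f r ^ 2 / δ + δ) := by
      refine integral_mono_on hab ?_ ?_ fun r hr => ?_
      · exact ((hf.mul (by unfold bumpDeriv2; fun_prop)).abs).intervalIntegrable_of_Icc hab
      · exact ((hf2.div_const δ).add intervalIntegrable_const).const_mul _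
      have hamgm : 2 * |f r| ≤ f r ^ 2 / δ + δ := by
        rw [div_add' _ _ _ hδ.ne', le_div_iff₀ hδ]
        nlinarith [sq_nonneg (|f r| - δ), sq_abs (f r)]
      rw [abs_mul]
      calc |f r| * |bumpDeriv2 a b r| ≤ |f r| * (2 * (b - a) ^ 2) :=
            mul_le_mul_of_nonneg_left (abs_bumpDeriv2_le hr) (abs_nonneg _)
        _ ≤ (b - a) ^ 2 * (f r ^ 2 / δ + δ) := by nlinarith [sq_nonneg (b - a)]
    _ = (b - a) ^ 2 * ((∫ r in a..b, f r ^ 2) / δ + δ * (b - a)) := by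
      rw [intervalIntegral.integral_const_mul,
        integral_add (hf2.div_const δ) intervalIntegrable_const, intervalIntegral.integral_div,
        intervalIntegral.integral_const, smul_eq_mul]
      ring

theorem sq_mul_pow_five_le_integral_sq {F F' F'' : ℝ → ℝ} {K : ℝ≥0}
    (hF : ∀ x, HasDerivAt F (F' x) x) (hF' : ∀ x, HasDerivAt F' (F'' x) x)
    (hF'' : LipschitzWith K F'') {b L : ℝ} (hL : 0 < L) (hLK : 2 * K * L ≤ |F'' b|) :
    F'' b ^ 2 * L ^ 5 ≤ 14400 * ∫ r in (b - L)..b, F r ^ 2 := by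
  set c := F'' b
  have hG : 0 ≤ ∫ r in (b - L)..b, F r ^ 2 := integral_nonneg (by linarith) fun r _ => sq_nonneg _
  rcases eq_or_ne c 0 with hc | hc
  · simp [hc, hG]
  have hclose : ∀ r ∈ Icc (b - L) b, |F'' r - c| ≤ |c| / 2 := by
    intro r hr
    have := hF''.dist_le_mul r b
    rw [Real.dist_eq, Real.dist_eq, abs_sub_comm r b, abs_of_nonneg (sub_nonneg.2 hr.2)] at this
    calc |F'' r - c| ≤ K * (b - r) := this
      _ ≤ K * L := mul_le_mul_of_nonneg_left (by linarith [hr.1]) K.2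
      _ ≤ |c| / 2 := by linarith
  have hFc : Continuous F := continuous_iff_continuousAt.2 fun x => (hF x).continuousAt
  have hlow := mul_le_abs_integral_mul_bump (by linarith) hF''.continuous.continuousOn hclose
  rw [← integral_mul_bumpDeriv2 hF hF' hF''.continuous] at hlow
  have hup := abs_integral_mul_bumpDeriv2_le (a := b - L) (b := b) (δ := |c| * L ^ 2 / 120)
    (by linarith) (by positivity [abs_pos.2 hc]) hFc.continuousOn
  rw [sub_sub_cancel] at hlow hup
  have h := hlow.trans hup
  rw [div_div_eq_mul_div] at h
  field_simp at h
  rw [← sq_abs c]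
  nlinarith [abs_pos.2 hc]

theorem ofReal_pow_six_le_window_average {F F' F'' : ℝ → ℝ} {K : ℝ≥0}
    (hF : ∀ x, HasDerivAt F (F' x) x) (hF' : ∀ x, HasDerivAt F' (F'' x) x)
    (hF'' : LipschitzWith K F'') {s l : ℝ} (hl : 2 * K * l = |F'' s|) :
    ENNReal.ofReal (F'' s ^ 6) ≤ ENNReal.ofReal (230400 * K ^ 4) *
      ((ENNReal.ofReal l)⁻¹ * ∫⁻ r in Ioc (s - l) s, ENNReal.ofReal (F r ^ 2)) := by
  set c := F'' s
  rcases eq_or_ne c 0 with hc | hc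
  · simp [hc]
  have hl0 : 0 < l := by
    have := abs_pos.2 hc
    nlinarith [K.2]
  have hFc : Continuous F := continuous_iff_continuousAt.2 fun x => (hF x).continuousAt
  set G := ∫ r in (s - l)..s, F r ^ 2
  have hG : ENNReal.ofReal G = ∫⁻ r in Ioc (s - l) s, ENNReal.ofReal (F r ^ 2) := by
    rw [show G = ∫ r in Ioc (s - l) s, F r ^ 2 from integral_of_le (by linarith)]
    exact ofReal_integral_eq_lintegral_ofReal
      ((hFc.pow 2).integrableOn_Icc.mono_set Ioc_subset_Icc_self)
      (Filter.Eventually.of_forall fun r => sq_nonneg _)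
  have hreal : c ^ 6 * l ≤ 230400 * K ^ 4 * G := by
    have hw := sq_mul_pow_five_le_integral_sq hF hF' hF'' hl0 hl.le
    calc c ^ 6 * l = 16 * K ^ 4 * (c ^ 2 * l ^ 5) := by
          rw [show c ^ 6 = c ^ 2 * (|c| ^ 2) ^ 2 by rw [sq_abs]; ring, ← hl]; ring
      _ ≤ 16 * K ^ 4 * (14400 * G) := by gcongr
      _ = 230400 * K ^ 4 * G := by ring
  rw [← hG]
  calc ENNReal.ofReal (c ^ 6) = ENNReal.ofReal (c ^ 6 * l) / ENNReal.ofReal l := by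
        rw [ENNReal.ofReal_mul (by positivity),
          ENNReal.mul_div_cancel_right (by simpa using hl0) ENNReal.ofReal_ne_top]
    _ ≤ ENNReal.ofReal (230400 * K ^ 4 * G) / ENNReal.ofReal l := by gcongr
    _ = _ := by
      rw [ENNReal.ofReal_mul (by positivity), div_eq_mul_inv, mul_assoc,
        mul_comm (ENNReal.ofReal G)]

theorem lintegral_indicator_inv_le_three {l : ℝ → ℝ} (hl : LipschitzWith (1 / 2) l) (r : ℝ) :
    ∫⁻ s, {s | r ∈ Ioc (s - l s) s}.indicator (fun s => (ENNReal.ofReal (l s))⁻¹) s ≤ 3 := by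
  have hwin : ∀ s, r ∈ Ioc (s - l s) s → r ≤ s ∧ s - r < 2 * l r ∧ 2 * l r < 3 * l s := by
    rintro s ⟨h1, h2⟩
    have := hl.dist_le_mul s r
    rw [Real.dist_eq, Real.dist_eq, abs_of_nonneg (sub_nonneg.2 h2), abs_le] at this
    push_cast at this
    exact ⟨h2, by linarith, by linarith⟩
  rcases le_or_gt (l r) 0 with hr | hr
  · have hzero : ∀ s, {s | r ∈ Ioc (s - l s) s}.indicator (fun s => (ENNReal.ofReal (l s))⁻¹) s
        = 0 := fun s => indicator_of_notMem (fun h => by linarith [hwin s h]) _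
    simp only [hzero, lintegral_zero, zero_le]
  set x := ENNReal.ofReal (2 * l r / 3)
  have hx : x⁻¹ * x = 1 := ENNReal.inv_mul_cancel (by simpa [x] using hr) ENNReal.ofReal_ne_top
  calc ∫⁻ s, {s | r ∈ Ioc (s - l s) s}.indicator (fun s => (ENNReal.ofReal (l s))⁻¹) s
      ≤ ∫⁻ s, (Icc r (r + 2 * l r)).indicator (fun _ => x⁻¹) s := by
        refine lintegral_mono fun s => ?_
        by_cases h : r ∈ Ioc (s - l s) s
        · obtain ⟨h1, h2, h3⟩ := hwin s h
          rw [indicator_of_mem (show s ∈ Icc r (r + 2 * l r) from ⟨h1, by linarith⟩),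
            indicator_of_mem (show s ∈ {s | r ∈ Ioc (s - l s) s} from h)]
          gcongr
          exact ENNReal.ofReal_le_ofReal (by linarith)
        · exact (indicator_of_notMem (show s ∉ {s | r ∈ Ioc (s - l s) s} from h) _).trans_le
            zero_le
    _ = x⁻¹ * (3 * x) := by
        rw [lintegral_indicator_const measurableSet_Icc, Real.volume_Icc, add_sub_cancel_left,
          show 2 * l r = 3 * (2 * l r / 3) by ring, ENNReal.ofReal_mul (by norm_num)]
        norm_num [x]
    _ = 3 := by rw [mul_left_comm, hx, mul_one]

theorem lintegral_inv_mul_setLIntegral_Ioc_le {l : ℝ → ℝ} (hl : LipschitzWith (1 / 2) l)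
    {g : ℝ → ℝ≥0∞} (hg : Measurable g) :
    ∫⁻ s, (ENNReal.ofReal (l s))⁻¹ * ∫⁻ r in Ioc (s - l s) s, g r ≤ 3 * ∫⁻ r, g r := by
  set W : Set (ℝ × ℝ) := {p | p.2 ∈ Ioc (p.1 - l p.1) p.1}
  have hlm := hl.continuous.measurable
  have hW : MeasurableSet W :=
    (measurableSet_lt (measurable_fst.sub (hlm.comp measurable_fst)) measurable_snd).inter
      (measurableSet_le measurable_snd measurable_fst)
  set Φ : ℝ × ℝ → ℝ≥0∞ := fun p => W.indicator (fun p => (ENNReal.ofReal (l p.1))⁻¹) p * g p.2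
  have hΦ : Measurable Φ :=
    ((ENNReal.measurable_ofReal.comp (hlm.comp measurable_fst)).inv.indicator hW).mul
      (hg.comp measurable_snd)
  have hslice : ∀ s, (ENNReal.ofReal (l s))⁻¹ * ∫⁻ r in Ioc (s - l s) s, g r =
      ∫⁻ r, Φ (s, r) := by
    intro s
    rw [← lintegral_indicator measurableSet_Ioc,
      ← lintegral_const_mul _ (hg.indicator measurableSet_Ioc)]
    congr 1 with r
    simp only [Φ]
    by_cases hr : r ∈ Ioc (s - l s) s
    · rw [indicator_of_mem hr, indicator_of_mem (show (s, r) ∈ W from hr)]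
    · rw [indicator_of_notMem hr, indicator_of_notMem (show (s, r) ∉ W from hr), mul_zero,
        zero_mul]
  have hfiber : ∀ r, ∫⁻ s, Φ (s, r) ≤ 3 * g r := fun r => by
    have hm : Measurable fun s => {s | r ∈ Ioc (s - l s) s}.indicator
        (fun s => (ENNReal.ofReal (l s))⁻¹) s :=
      (ENNReal.measurable_ofReal.comp hlm).inv.indicator
        ((measurableSet_lt (measurable_id.sub hlm) measurable_const).inter
          (measurableSet_le measurable_const measurable_id))
    calc ∫⁻ s, Φ (s, r)
        = (∫⁻ s, {s | r ∈ Ioc (s - l s) s}.indicator (fun s => (ENNReal.ofReal (l s))⁻¹) s) *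
            g r := lintegral_mul_const (g r) hm
      _ ≤ 3 * g r := by gcongr; exact lintegral_indicator_inv_le_three hl r
  calc ∫⁻ s, (ENNReal.ofReal (l s))⁻¹ * ∫⁻ r in Ioc (s - l s) s, g r
      = ∫⁻ s, ∫⁻ r, Φ (s, r) := by simp_rw [hslice]
    _ = ∫⁻ r, ∫⁻ s, Φ (s, r) := lintegral_lintegral_swap hΦ.aemeasurable
    _ ≤ ∫⁻ r, 3 * g r := lintegral_mono hfiber
    _ = 3 * ∫⁻ r, g r := lintegral_const_mul _ hg

theorem LipschitzWith.abs_div_two_mul {f : ℝ → ℝ} {K : ℝ≥0} (hf : LipschitzWith K f) :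
    LipschitzWith (1 / 2) fun s => |f s| / (2 * K) := by
  refine LipschitzWith.of_dist_le_mul fun x y => ?_
  rw [Real.dist_eq, Real.dist_eq, ← sub_div, abs_div,
    abs_of_nonneg (by positivity : (0 : ℝ) ≤ 2 * K)]
  refine div_le_of_le_mul₀ (by positivity) (by positivity) ?_
  have := hf.dist_le_mul x y
  rw [Real.dist_eq, Real.dist_eq] at this
  push_cast
  linarith [abs_abs_sub_abs_le_abs_sub (f x) (f y)]

theorem lintegral_pow_six_le_of_lipschitzWith {F F' F'' : ℝ → ℝ} {K : ℝ≥0}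
    (hF : ∀ x, HasDerivAt F (F' x) x) (hF' : ∀ x, HasDerivAt F' (F'' x) x)
    (hF'' : LipschitzWith K F'') (h0 : F'' 0 = 0) (t : ℝ) :
    ∫⁻ s in Ioc 0 t, ENNReal.ofReal (F'' s ^ 6) ≤
      ENNReal.ofReal (691200 * K ^ 4) * ∫⁻ s in Ioc 0 t, ENNReal.ofReal (F s ^ 2) := by
  rcases eq_or_ne K 0 with rfl | hK
  · have hzero : ∀ s, F'' s = 0 := fun s => by simpa [h0] using hF''.dist_le_mul s 0
    simp [hzero]
  have hK' : (0 : ℝ) < K := NNReal.coe_pos.2 (pos_iff_ne_zero.2 hK)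
  have hFc : Continuous F := continuous_iff_continuousAt.2 fun x => (hF x).continuousAt
  set l : ℝ → ℝ := fun s => |F'' s| / (2 * K)
  have hls : ∀ s, 0 ≤ s → l s ≤ s := fun s hs => by
    refine div_le_of_le_mul₀ (by positivity) hs ?_
    have := hF''.dist_le_mul s 0
    rw [Real.dist_eq, Real.dist_eq, h0, sub_zero, sub_zero, abs_of_nonneg hs] at this
    nlinarith
  set g := (Ioc 0 t).indicator fun r => ENNReal.ofReal (F r ^ 2)
  have hg : Measurable g := ((hFc.pow 2).measurable.ennreal_ofReal).indicator measurableSet_Ioc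
  have hpt : ∀ s ∈ Ioc 0 t, ENNReal.ofReal (F'' s ^ 6) ≤ ENNReal.ofReal (230400 * K ^ 4) *
      ((ENNReal.ofReal (l s))⁻¹ * ∫⁻ r in Ioc (s - l s) s, g r) := by
    intro s hs
    rw [setLIntegral_congr_fun measurableSet_Ioc fun r hr => indicator_of_mem
      (show r ∈ Ioc 0 t from ⟨by linarith [hr.1, hls s hs.1.le], hr.2.trans hs.2⟩) _]
    exact ofReal_pow_six_le_window_average hF hF' hF'' (mul_div_cancel₀ _ (by positivity))
  calc ∫⁻ s in Ioc 0 t, ENNReal.ofReal (F'' s ^ 6)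
      ≤ ∫⁻ s in Ioc 0 t, ENNReal.ofReal (230400 * K ^ 4) *
          ((ENNReal.ofReal (l s))⁻¹ * ∫⁻ r in Ioc (s - l s) s, g r) :=
        setLIntegral_mono' measurableSet_Ioc hpt
    _ ≤ ENNReal.ofReal (230400 * K ^ 4) *
          ∫⁻ s, (ENNReal.ofReal (l s))⁻¹ * ∫⁻ r in Ioc (s - l s) s, g r := by
        rw [lintegral_const_mul' _ _ ENNReal.ofReal_ne_top]
        gcongr
        exact Measure.restrict_le_self
    _ ≤ ENNReal.ofReal (230400 * K ^ 4) * (3 * ∫⁻ r, g r) := by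
        gcongr
        exact lintegral_inv_mul_setLIntegral_Ioc_le hF''.abs_div_two_mul hg
    _ = ENNReal.ofReal (691200 * K ^ 4) * ∫⁻ s in Ioc 0 t, ENNReal.ofReal (F s ^ 2) := by
        rw [lintegral_indicator measurableSet_Ioc, ← mul_assoc, ← ENNReal.ofReal_ofNat 3,
          ← ENNReal.ofReal_mul (by positivity)]
        ring_nf

theorem integral_pow_six_le_of_lipschitzWith {F F' F'' : ℝ → ℝ} {K : ℝ≥0}
    (hF : ∀ x, HasDerivAt F (F' x) x) (hF' : ∀ x, HasDerivAt F' (F'' x) x)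
    (hF'' : LipschitzWith K F'') (h0 : F'' 0 = 0) {t : ℝ} (ht : 0 ≤ t) :
    ∫ s in 0..t, F'' s ^ 6 ≤ 691200 * K ^ 4 * ∫ s in 0..t, F s ^ 2 := by
  have hFc : Continuous F := continuous_iff_continuousAt.2 fun x => (hF x).continuousAt
  rw [integral_of_le ht, integral_of_le ht, integral_eq_lintegral_of_nonneg_ae
    (f := fun s => F'' s ^ 6) (Filter.Eventually.of_forall fun s => by positivity)
    (hF''.continuous.pow 6).aestronglyMeasurable]
  refine ENNReal.toReal_le_of_le_ofReal (by positivity)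
    ((lintegral_pow_six_le_of_lipschitzWith hF hF' hF'' h0 t).trans_eq ?_)
  rw [ENNReal.ofReal_mul (p := 691200 * (K : ℝ) ^ 4) (by positivity),
    ofReal_integral_eq_lintegral_ofReal (f := fun r => F r ^ 2)
    ((by fun_prop : Continuous fun r => F r ^ 2).integrableOn_Icc.mono_set Ioc_subset_Icc_self)
    (Filter.Eventually.of_forall fun r => sq_nonneg _)]

theorem iterPrim_succ_zero (u : ℝ → ℝ) (k : ℕ) : iterPrim u (k + 1) 0 = 0 := by
  simp [iterPrim]

theorem iterPrim_succ_eqOn {u v : ℝ → ℝ} {t : ℝ} (h : u =ᵐ[volume.restrict (Ioc 0 t)] v) :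
    ∀ k, EqOn (iterPrim u (k + 1)) (iterPrim v (k + 1)) (Icc 0 t)
  | 0, s, hs => by
    refine integral_congr_ae ?_
    filter_upwards [ae_restrict_iff' measurableSet_Ioc |>.1 h] with x hx hxs
    rw [uIoc_of_le hs.1] at hxs
    exact hx ⟨hxs.1, hxs.2.trans hs.2⟩
  | k + 1, s, hs => by
    refine integral_congr fun x hx => ?_
    rw [uIcc_of_le hs.1] at hx
    exact iterPrim_succ_eqOn h k ⟨hx.1, hx.2.trans hs.2⟩

theorem lipschitzWith_iterPrim_one {u : ℝ → ℝ} {K : ℝ≥0} (hu : AEStronglyMeasurable u)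
    (hK : ∀ x, |u x| ≤ K) : LipschitzWith K (iterPrim u 1) := by
  have hint : ∀ a b, IntervalIntegrable u volume a b := fun a b =>
    intervalIntegrable_const.mono_fun' hu.restrict (Filter.Eventually.of_forall hK)
  refine LipschitzWith.of_dist_le_mul fun x y => ?_
  simp only [iterPrim, Real.dist_eq]
  rw [integral_interval_sub_left (hint 0 x) (hint 0 y), ← Real.norm_eq_abs]
  exact norm_integral_le_of_norm_le_const fun s _ => hK s

theorem hasDerivAt_iterPrim_succ {u : ℝ → ℝ} {k : ℕ} (h : Continuous (iterPrim u k)) (x : ℝ) :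
    HasDerivAt (iterPrim u (k + 1)) (iterPrim u k x) x :=
  (h.integral_hasStrictDerivAt 0 x).hasDerivAt

theorem stmt10 :
    ∃ C : ℝ, 0 < C ∧ ∀ t : ℝ, 0 < t → ∀ u : ℝ → ℝ, ∀ M : ℝ, Measurable u →
      (∀ᵐ s ∂(volume.restrict (Set.Ioc 0 t)), |u s| ≤ M) →
      (∫ s in (0:ℝ)..t, (iterPrim u 1 s) ^ 6) ≤
        C * M ^ 4 * ∫ s in (0:ℝ)..t, (iterPrim u 3 s) ^ 2 := by
  refine ⟨691200, by norm_num, fun t ht u M hu hbd => ?_⟩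
  have hM : 0 ≤ M := by
    have : (ae (volume.restrict (Ioc 0 t))).NeBot := ae_neBot.2 (by simp [ht])
    obtain ⟨s, hs⟩ := hbd.exists
    exact (abs_nonneg _).trans hs
  -- clipping makes `u` bounded everywhere, hence its primitives globally Lipschitz, resp. `C¹`
  set v : ℝ → ℝ := fun x => max (-M) (min (u x) M)
  have huv : u =ᵐ[volume.restrict (Ioc 0 t)] v := hbd.mono fun x hx => by
    rw [abs_le] at hx
    simp [v, min_eq_left hx.2, max_eq_right hx.1]
  have hv : ∀ x, |v x| ≤ (⟨M, hM⟩ : ℝ≥0) := fun x =>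
    abs_le.2 ⟨le_max_left _ _, max_le (by simpa using hM) (min_le_right _ _)⟩
  have h1 := lipschitzWith_iterPrim_one
    (measurable_const.max (hu.min measurable_const)).aestronglyMeasurable hv
  have h2 := hasDerivAt_iterPrim_succ h1.continuous
  have h3 := hasDerivAt_iterPrim_succ
    (continuous_iff_continuousAt.2 fun x => (h2 x).continuousAt)
  have hIcc : uIcc 0 t = Icc 0 t := uIcc_of_le ht.le
  rw [integral_congr fun s hs => congrArg (· ^ 6) (iterPrim_succ_eqOn huv 0 (hIcc ▸ hs)),
    integral_congr fun s hs => congrArg (· ^ 2) (iterPrim_succ_eqOn huv 2 (hIcc ▸ hs))]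
  exact integral_pow_six_le_of_lipschitzWith h3 h2 h1 (iterPrim_succ_zero v 0) ht.le
end

section
/- In any Lie algebra with fixed element x₀, for every ν ∈ ℕ* there exist integer coefficients α^ν_j (for 1 ≤ 2j+1 ≤ ν) such that for every element b, [b, b0^ν] = ∑_{1 ≤ 2j+1 ≤ ν} α^ν_j [b0^j, b0^{j+1}] 0^{ν−2j−1}, where c0^k denotes the k-fold right bracketing of c with x₀. Moreover the coefficients satisfy the recursion α_j^ν = α_j^{ν−1} − α_{j−1}^{ν−2}. -/
/-- `rb x₀ c k` is the `k`-fold right-bracketing of `c` with `x₀`, i.e. `c0^k`. -/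
def rb {L : Type*} [LieRing L] (x₀ : L) : L → ℕ → L
  | c, 0 => c
  | c, (k+1) => ⁅rb x₀ c k, x₀⁆

/-!
Write `B(m, n) = ⁅b0^m, b0^n⁆`. Since `b0^{n+1} = ⁅b0^n, x₀⁆`, the Leibniz rule gives
`B(m, n+1) = ⁅B(m, n), x₀⁆ - B(m+1, n)`, while `B(m, m) = 0` and `B(m, m+1)` is itself a basic
bracket `⁅b0^m, b0^{m+1}⁆`. Induction on `n - m` therefore expresses every `B(m, n)` as an integer
combination of the elements `⁅b0^j, b0^{j+1}⁆0^{m+n-(2j+1)}`, with coefficients obeying the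
same recursion; the theorem is the case `m = 0`.
-/

open Finset

/-- `lieCoeff d m j` is the coefficient of `⁅b0^j, b0^{j+1}⁆` in `⁅b0^m, b0^{m+d}⁆`. -/
def lieCoeff : ℕ → ℕ → ℕ → ℤ
  | 0, _ => 0
  | 1, m => Pi.single m 1
  | d + 2, m => lieCoeff (d + 1) m - lieCoeff d (m + 1)

lemma lieCoeff_succ_succ (d m j : ℕ) : lieCoeff d (m + 1) (j + 1) = lieCoeff d m j := by
  induction d, m using lieCoeff.induct generalizing j with
  | case1 => rfl
  | case2 m => simp [lieCoeff, Pi.single_apply]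
  | case3 d m ih₁ ih₂ => simp only [lieCoeff, Pi.sub_apply, ih₁, ih₂]

lemma lieCoeff_eq_zero_of_lt {d m j : ℕ} (h : 2 * m + d < 2 * j + 1) : lieCoeff d m j = 0 := by
  induction d, m using lieCoeff.induct with
  | case1 => rfl
  | case2 m => simp [lieCoeff, Pi.single_apply]; omega
  | case3 d m ih₁ ih₂ =>
    simp only [lieCoeff, Pi.sub_apply, ih₁ (by omega), ih₂ (by omega), sub_zero]

section Expansion

variable {L : Type*} [LieRing L] (x₀ : L)

lemma lie_rb_succ_right (a c : L) (m n : ℕ) :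
    ⁅rb x₀ a m, rb x₀ c (n + 1)⁆ =
      ⁅⁅rb x₀ a m, rb x₀ c n⁆, x₀⁆ - ⁅rb x₀ a (m + 1), rb x₀ c n⁆ := by
  rw [rb, leibniz_lie, ← lie_skew (rb x₀ c n), rb, sub_eq_add_neg]

def expansion (b : L) (n : ℕ) (c : ℕ → ℤ) : L :=
  ∑ j ∈ (range n).filter (fun j => 2 * j + 1 ≤ n),
    c j • rb x₀ ⁅rb x₀ b j, rb x₀ b (j + 1)⁆ (n - (2 * j + 1))

variable {x₀}

@[simp]
lemma expansion_zero (b : L) (n : ℕ) : expansion x₀ b n 0 = 0 := by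
  simp [expansion]

lemma expansion_sub (b : L) (n : ℕ) (c c' : ℕ → ℤ) :
    expansion x₀ b n (c - c') = expansion x₀ b n c - expansion x₀ b n c' := by
  simp only [expansion, Pi.sub_apply, sub_smul, sum_sub_distrib]

lemma expansion_single (b : L) (m : ℕ) :
    expansion x₀ b (2 * m + 1) (Pi.single m 1) = ⁅rb x₀ b m, rb x₀ b (m + 1)⁆ := by
  rw [expansion, sum_eq_single m]
  · simp [rb]
  · intro j _ hj
    simp [hj]
  · intro hm
    exact absurd (mem_filter.2 ⟨mem_range.2 (by omega), by omega⟩) hm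

lemma lie_expansion (b : L) {n : ℕ} {c : ℕ → ℤ} (hc : ∀ j, n < 2 * j + 1 → c j = 0) :
    ⁅expansion x₀ b n c, x₀⁆ = expansion x₀ b (n + 1) c := by
  have hsub : (range n).filter (fun j => 2 * j + 1 ≤ n) ⊆
      (range (n + 1)).filter (fun j => 2 * j + 1 ≤ n + 1) := by
    intro j
    simp only [mem_filter, mem_range]
    omega
  rw [expansion, expansion, sum_lie, ← sum_subset hsub]
  · refine sum_congr rfl fun j hj => ?_
    rw [mem_filter] at hj
    rw [smul_lie, ← rb, show n + 1 - (2 * j + 1) = n - (2 * j + 1) + 1 by omega]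
  · intro j _ hj
    simp only [mem_filter, mem_range, not_and, not_le] at hj
    rw [hc j (by omega), zero_smul]

lemma lie_rb_rb_add (b : L) (d m : ℕ) :
    ⁅rb x₀ b m, rb x₀ b (m + d)⁆ = expansion x₀ b (2 * m + d) (lieCoeff d m) := by
  induction d, m using lieCoeff.induct with
  | case1 m => simp [lieCoeff]
  | case2 m => rw [lieCoeff, expansion_single]
  | case3 d m ih₁ ih₂ =>
    change ⁅rb x₀ b m, rb x₀ b (m + (d + 1) + 1)⁆ =
      expansion x₀ b (2 * m + (d + 2)) (lieCoeff (d + 2) m)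
    rw [lie_rb_succ_right, ih₁, lie_expansion b fun j h => lieCoeff_eq_zero_of_lt h,
      show m + (d + 1) = m + 1 + d by omega, ih₂, lieCoeff, expansion_sub]
    congr 2; omega

end Expansion

theorem stmt13 {L : Type*} [LieRing L] (x₀ : L) :
    ∃ α : ℕ → ℕ → ℤ,
      (∀ (b : L) (ν : ℕ), 1 ≤ ν →
        ⁅b, rb x₀ b ν⁆ =
          ∑ j ∈ (Finset.range ν).filter (fun j => 2 * j + 1 ≤ ν),
            α ν j • rb x₀ ⁅rb x₀ b j, rb x₀ b (j + 1)⁆ (ν - (2 * j + 1))) ∧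
      (∀ ν j : ℕ, 3 ≤ ν → 1 ≤ j → α ν j = α (ν - 1) j - α (ν - 2) (j - 1)) := by
  refine ⟨fun ν => lieCoeff ν 0, fun b ν _ => ?_, fun ν j hν hj => ?_⟩
  · simpa [rb, expansion] using lie_rb_rb_add b ν 0
  · obtain ⟨d, rfl⟩ : ∃ d, ν = d + 2 := ⟨ν - 2, by omega⟩
    obtain ⟨i, rfl⟩ : ∃ i, j = i + 1 := ⟨j - 1, by omega⟩
    change lieCoeff (d + 2) 0 (i + 1) = lieCoeff (d + 1) 0 (i + 1) - lieCoeff d 0 i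
    rw [lieCoeff, Pi.sub_apply, lieCoeff_succ_succ]
end

section
/- For the system ẋ₁ = u, ẋ₂ = x₁, ẋ₃ = x₂² − x₁⁵ with x(0)=0, for every ρ > 0, every T ≤ 1/(9ρ³), and every u ∈ L^∞((0,T);ℝ) with ‖u‖_{L^∞} ≤ ρ and x₁(T;u) = 0, one has x₃(T;u) ≥ 0. Key estimates: ∫₀ᵀ u₁⁴ = −3∫₀ᵀ u u₁² u₂ ≤ 3ρ(∫₀ᵀ u₁⁴ ∫₀ᵀ u₂²)^{1/2}, hence ∫₀ᵀ u₁⁴ ≤ 9ρ² ∫₀ᵀ u₂², and |∫₀ᵀ u₁⁵| ≤ ρT ∫₀ᵀ u₁⁴ ≤ 9ρ³ T ∫₀ᵀ u₂². -/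
/-!
Write u₁, u₂ for the first and second primitives of u. Since u₁(T) = 0, the product u₁³u₂
vanishes at both ends of [0, T], so integrating its derivative 3u u₁²u₂ + u₁⁴ gives
∫ u₁⁴ = -3 ∫ u u₁²u₂. With |u| ≤ ρ and AM-GM this yields ∫ u₁⁴ ≤ 9ρ² ∫ u₂². As |u₁| ≤ ρT on
[0, T], ∫ u₁⁵ ≤ ρT ∫ u₁⁴ ≤ 9ρ³T ∫ u₂² ≤ ∫ u₂².
-/

open MeasureTheory Set intervalIntegral
open scoped Interval

section Primitives

variable {u : ℝ → ℝ} {ρ T : ℝ}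

lemma intervalIntegrable_of_ae_abs_le (hT : 0 ≤ T)
    (hu : AEStronglyMeasurable u (volume.restrict (Ioc 0 T)))
    (hbound : ∀ᵐ x ∂volume.restrict (Ioc 0 T), |u x| ≤ ρ) :
    IntervalIntegrable u volume 0 T := by
  rw [intervalIntegrable_iff_integrableOn_Ioc_of_le hT]
  have : IsFiniteMeasure (volume.restrict (Ioc (0:ℝ) T)) := by
    rw [isFiniteMeasure_restrict]; exact measure_Ioc_lt_top.ne
  exact Integrable.of_bound hu ρ (by simpa using hbound)

lemma abs_integral_le_of_ae_abs_le (hbound : ∀ᵐ x ∂volume.restrict (Ioc 0 T), |u x| ≤ ρ)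
    {s : ℝ} (hs : 0 ≤ s) (hsT : s ≤ T) :
    |∫ x in 0..s, u x| ≤ ρ * s := by
  have h : ∀ᵐ x, x ∈ Ι 0 s → ‖u x‖ ≤ ρ := by
    rw [uIoc_of_le hs]
    filter_upwards [(ae_restrict_iff' measurableSet_Ioc).mp hbound] with x hx hxs
    exact hx (Ioc_subset_Ioc_right hsT hxs)
  simpa [abs_of_nonneg hs] using norm_integral_le_of_norm_le_const_ae h

theorem integral_primitive_pow_four_eq (hu : IntervalIntegrable u volume 0 T)
    (hend : ∫ x in 0..T, u x = 0) :
    ∫ s in 0..T, (∫ x in 0..s, u x) ^ 4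
      = -3 * ∫ s in 0..T, u s * (∫ x in 0..s, u x) ^ 2 * ∫ x in 0..s, ∫ y in 0..x, u y := by
  set u₁ : ℝ → ℝ := fun s => ∫ x in 0..s, u x
  set u₂ : ℝ → ℝ := fun s => ∫ x in 0..s, u₁ x
  have hu₁ : AbsolutelyContinuousOnInterval u₁ 0 T :=
    hu.absolutelyContinuousOnInterval_intervalIntegral left_mem_uIcc
  have hu₁int : IntervalIntegrable u₁ volume 0 T := hu₁.continuousOn.intervalIntegrable
  have hu₂ : AbsolutelyContinuousOnInterval u₂ 0 T :=
    hu₁int.absolutelyContinuousOnInterval_intervalIntegral left_mem_uIcc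
  -- u is only bounded, so the product rule for u₁³u₂ is the a.e. one for absolutely continuous maps
  have hparts := (hu₁.fun_mul (hu₁.fun_mul hu₁)).integral_deriv_mul_eq_sub hu₂
  have hderiv : ∀ᵐ x, x ∈ Ι 0 T →
      deriv (fun x => u₁ x * (u₁ x * u₁ x)) x * u₂ x + u₁ x * (u₁ x * u₁ x) * deriv u₂ x
        = 3 * (u x * u₁ x ^ 2 * u₂ x) + u₁ x ^ 4 := by
    filter_upwards [hu.ae_hasDerivAt_integral, hu₁int.ae_hasDerivAt_integral] with x h₁ h₂ hx
    have d₁ : HasDerivAt u₁ (u x) x := h₁ (uIoc_subset_uIcc hx) 0 left_mem_uIcc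
    have d₂ : HasDerivAt u₂ (u₁ x) x := h₂ (uIoc_subset_uIcc hx) 0 left_mem_uIcc
    rw [(d₁.fun_mul (d₁.fun_mul d₁)).deriv, d₂.deriv]
    ring
  have hint : IntervalIntegrable (fun x => u x * u₁ x ^ 2 * u₂ x) volume 0 T :=
    (hu.mul_continuousOn (hu₁.continuousOn.pow 2)).mul_continuousOn hu₂.continuousOn
  rw [integral_congr_ae hderiv, integral_add (hint.const_mul 3)
    (hu₁.continuousOn.fun_pow 4).intervalIntegrable, intervalIntegral.integral_const_mul] at hparts
  have hu₁T : u₁ T = 0 := hend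
  simp only [hu₁T, u₂, u₁, integral_same] at hparts
  linarith


lemma neg_three_mul_le_of_abs_le_s16 {w a b : ℝ} (hw : |w| ≤ ρ) :
    -3 * (w * a ^ 2 * b) ≤ a ^ 4 / 2 + 9 / 2 * ρ ^ 2 * b ^ 2 := by
  have h : -(w * b) ≤ ρ * |b| :=
    (neg_le_abs _).trans ((abs_mul w b).trans_le (mul_le_mul_of_nonneg_right hw (abs_nonneg b)))
  nlinarith [sq_nonneg (a ^ 2 - 3 * ρ * |b|), sq_abs b, mul_le_mul_of_nonneg_left h (sq_nonneg a)]

theorem integral_primitive_pow_four_le (hT : 0 ≤ T) (hu : IntervalIntegrable u volume 0 T)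
    (hbound : ∀ᵐ x ∂volume.restrict (Ioc 0 T), |u x| ≤ ρ) (hend : ∫ x in 0..T, u x = 0) :
    ∫ s in 0..T, (∫ x in 0..s, u x) ^ 4
      ≤ 9 * ρ ^ 2 * ∫ s in 0..T, (∫ x in 0..s, ∫ y in 0..x, u y) ^ 2 := by
  set u₁ : ℝ → ℝ := fun s => ∫ x in 0..s, u x
  set u₂ : ℝ → ℝ := fun s => ∫ x in 0..s, u₁ x
  have hu₁ : ContinuousOn u₁ (uIcc 0 T) :=
    (hu.absolutelyContinuousOnInterval_intervalIntegral left_mem_uIcc).continuousOn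
  have hu₂ : ContinuousOn u₂ (uIcc 0 T) :=
    (hu₁.intervalIntegrable.absolutelyContinuousOnInterval_intervalIntegral
      left_mem_uIcc).continuousOn
  have hint₄ : IntervalIntegrable (fun x => u₁ x ^ 4) volume 0 T :=
    (hu₁.fun_pow 4).intervalIntegrable
  have hint₂ : IntervalIntegrable (fun x => u₂ x ^ 2) volume 0 T :=
    (hu₂.fun_pow 2).intervalIntegrable
  have hmono : ∫ x in 0..T, -3 * (u x * u₁ x ^ 2 * u₂ x)
      ≤ ∫ x in 0..T, (u₁ x ^ 4 / 2 + 9 / 2 * ρ ^ 2 * u₂ x ^ 2) := by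
    refine integral_mono_ae_restrict hT
      (((hu.mul_continuousOn (hu₁.fun_pow 2)).mul_continuousOn hu₂).const_mul _)
      ((hint₄.div_const 2).add (hint₂.const_mul _)) ?_
    rw [← Measure.restrict_congr_set Ioc_ae_eq_Icc]
    filter_upwards [hbound] with x hx using neg_three_mul_le_of_abs_le_s16 hx
  rw [intervalIntegral.integral_const_mul, ← integral_primitive_pow_four_eq hu hend,
    integral_add (hint₄.div_const 2) (hint₂.const_mul _), intervalIntegral.integral_div,
    intervalIntegral.integral_const_mul] at hmono
  linarith

lemma integral_pow_five_le_of_abs_le {f : ℝ → ℝ} {C : ℝ} (hT : 0 ≤ T)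
    (hf : ContinuousOn f (Icc 0 T)) (hC : ∀ s ∈ Icc 0 T, |f s| ≤ C) :
    ∫ s in 0..T, f s ^ 5 ≤ C * ∫ s in 0..T, f s ^ 4 := by
  rw [← intervalIntegral.integral_const_mul]
  refine integral_mono_on hT ?_ ?_ fun s hs => ?_
  · exact (hf.fun_pow 5).intervalIntegrable_of_Icc hT
  · exact ((hf.fun_pow 4).intervalIntegrable_of_Icc hT).const_mul C
  calc f s ^ 5 = f s * f s ^ 4 := by ring
    _ ≤ C * f s ^ 4 := mul_le_mul_of_nonneg_right ((le_abs_self _).trans (hC s hs)) (by positivity)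

end Primitives

theorem stmt16 (ρ T : ℝ) (hρ : 0 < ρ) (hT : 0 < T) (hTρ : T ≤ 1 / (9 * ρ ^ 3))
    (u : ℝ → ℝ) (hmeas : Measurable u)
    (hbound : ∀ᵐ s ∂(volume.restrict (Set.Ioc 0 T)), |u s| ≤ ρ)
    (hend : (∫ x in (0:ℝ)..T, u x) = 0) :
    0 ≤ (∫ s in (0:ℝ)..T, (∫ x in (0:ℝ)..s, ∫ y in (0:ℝ)..x, u y) ^ 2)
        - ∫ s in (0:ℝ)..T, (∫ x in (0:ℝ)..s, u x) ^ 5 := by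
  have hu : IntervalIntegrable u volume 0 T :=
    intervalIntegrable_of_ae_abs_le hT.le hmeas.aestronglyMeasurable hbound
  have hsmall : 9 * ρ ^ 3 * T ≤ 1 := by
    rwa [le_div_iff₀ (by positivity), mul_comm] at hTρ
  have hu₁ : ContinuousOn (fun s => ∫ x in 0..s, u x) (Icc 0 T) := by
    simpa only [uIcc_of_le hT.le] using
      (hu.absolutelyContinuousOnInterval_intervalIntegral left_mem_uIcc).continuousOn
  have hfive := integral_pow_five_le_of_abs_le hT.le hu₁ fun s hs =>
    (abs_integral_le_of_ae_abs_le hbound hs.1 hs.2).trans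
      (mul_le_mul_of_nonneg_left hs.2 hρ.le)
  have hfour := integral_primitive_pow_four_le hT.le hu hbound hend
  have hB : 0 ≤ ∫ s in 0..T, (∫ x in 0..s, ∫ y in 0..x, u y) ^ 2 :=
    integral_nonneg hT.le fun s _ => sq_nonneg _
  linarith [mul_le_mul_of_nonneg_left hfour (by positivity : 0 ≤ ρ * T),
    mul_le_mul_of_nonneg_right hsmall hB]
end
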